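/- Let A and C be open bounded subsets of ℝⁿ with closure(A) ⊂ C. Then there exists an open bounded set U with C¹ (indeed smooth) boundary such that A ⊂ U and closure(U) ⊂ C. -/

import Mathlib

set_option maxHeartbeats 1000000

open Bornology Set Metric MeasureTheory
open scoped RealInnerProductSpace Topology

section Helpers

variable {n : ℕ}

noncomputable instance euclProdHaar (n : ℕ) : MeasureTheory.Measure.IsAddHaarMeasure
    (volume : Measure ((EuclideanSpace ℝ (Fin n)) × ℝ)) :=
  MeasureTheory.Measure.prod.instIsAddHaarMeasure volume volume

theorem coord_abs_le_norm (x : EuclideanSpace ℝ (Fin n)) (j : Fin n) : |x j| ≤ ‖x‖ := by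
  have h := abs_real_inner_le_norm (EuclideanSpace.single j (1 : ℝ)) x
  have h1 : ⟪EuclideanSpace.single j (1 : ℝ), x⟫ = x j := by
    simp [EuclideanSpace.inner_single_left]
  have h2 : ‖EuclideanSpace.single j (1 : ℝ)‖ = 1 := by
    rw [EuclideanSpace.norm_single]; simp
  rwa [h1, h2, one_mul] at h

end Helpers

/-- Density of smooth sets: if `A`, `C` are open bounded with `closure A ⊆ C`,
then there is an open bounded `U`, with smooth boundary (a regular superlevel
set of a smooth function), such that `A ⊆ U` and `closure U ⊆ C`. -/
theorem stmt16 {n : ℕ} (A C : Set (EuclideanSpace ℝ (Fin n)))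
    (hAo : IsOpen A) (hAb : IsBounded A)
    (hCo : IsOpen C) (hCb : IsBounded C)
    (hAC : closure A ⊆ C) :
    ∃ U : Set (EuclideanSpace ℝ (Fin n)),
      IsOpen U ∧ IsBounded U ∧ A ⊆ U ∧ closure U ⊆ C ∧
        ∃ (φ : EuclideanSpace ℝ (Fin n) → ℝ) (t : ℝ),
          ContDiff ℝ (⊤ : ℕ∞) φ ∧ U = {x | t < φ x} ∧
            ∀ x, φ x = t → fderiv ℝ φ x ≠ 0 := by
  classical
  -- the compact set K = closure A
  set K := closure A with hK_def
  have hKc : IsCompact K := Metric.isCompact_of_isClosed_isBounded isClosed_closure hAb.closure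
  -- an intermediate open set V with K ⊆ V, closure V ⊆ C
  obtain ⟨V, hVo, hKV, hVC⟩ := normal_exists_closure_subset isClosed_closure hCo hAC
  have hVb : IsBounded (closure V) := hCb.subset hVC
  -- a thickening of K inside V
  obtain ⟨δ, hδ, hthick⟩ := hKc.exists_thickening_subset_open hVo hKV
  -- radius R₀ with closure V ⊆ closedBall 0 R₀
  obtain ⟨R₀, hR₀, hVR⟩ := hVb.subset_closedBall_lt 0 0
  set κ : ℝ := (R₀ + 1)⁻¹ with hκ_def
  have hκ : 0 < κ := by rw [hκ_def]; positivity
  -- a finite (δ/4)-net of K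
  have hcov : K ⊆ ⋃ a ∈ K, ball a (δ / 4) := fun x hx =>
    Set.mem_biUnion hx (mem_ball_self (by positivity))
  obtain ⟨b, hbK, hbfin, hbcov⟩ :=
    hKc.elim_finite_subcover_image (fun a _ => isOpen_ball) hcov
  obtain ⟨s, hmem_s⟩ : ∃ s : Finset (EuclideanSpace ℝ (Fin n)), ∀ a, a ∈ s ↔ a ∈ b :=
    ⟨hbfin.toFinset, fun a => hbfin.mem_toFinset⟩
  set Nc : ℕ := s.card with hNc_def
  -- the exponential rate β and the threshold scale m
  set L : ℝ := Real.log (4 * Nc + 4) with hL_def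
  have hL : 0 < L := Real.log_pos (by push_cast; linarith [Nat.cast_nonneg (α := ℝ) Nc])
  set β : ℝ := 16 * L / (15 * δ ^ 2) with hβ_def
  have hβ : 0 < β := by rw [hβ_def]; positivity
  have hβδ : β * δ ^ 2 = 16 * L / 15 := by
    rw [hβ_def]; field_simp
  set m : ℝ := Real.exp (-(β * δ ^ 2 / 16)) with hm_def
  have hm : 0 < m := Real.exp_pos _
  -- the key smallness estimate
  have hkey : (Nc : ℝ) * Real.exp (-(β * δ ^ 2)) ≤ m / 4 := by
    have h1 : Real.exp (-(β * δ ^ 2)) = m * Real.exp (-L) := by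
      rw [hm_def, ← Real.exp_add]
      congr 1
      rw [hβδ]; ring
    have h2 : Real.exp (-L) = 1 / (4 * Nc + 4) := by
      rw [Real.exp_neg, hL_def, Real.exp_log (by positivity)]
      ring
    rw [h1, h2]
    have h4 : (0:ℝ) < 4 * (Nc:ℝ) + 4 := by positivity
    have hq : (Nc : ℝ) * (1 / (4 * Nc + 4)) ≤ 1 / 4 := by
      rw [mul_one_div, div_le_div_iff₀ h4 (by norm_num)]
      linarith
    calc (Nc : ℝ) * (m * (1 / (4 * Nc + 4))) = m * ((Nc : ℝ) * (1 / (4 * Nc + 4))) := by ring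
      _ ≤ m * (1 / 4) := mul_le_mul_of_nonneg_left hq hm.le
      _ = m / 4 := by ring
  -- the unperturbed function Φ₀
  set Φ₀ : EuclideanSpace ℝ (Fin n) → ℝ := fun y => ∑ a ∈ s, Real.exp (-(β * ⟪y - a, y - a⟫)) with hΦ₀_def
  have hΦ₀ : ContDiff ℝ (⊤ : ℕ∞) Φ₀ := by
    apply ContDiff.sum (fun a _ => ?_)
    exact Real.contDiff_exp.comp
      ((contDiff_const.mul (ContDiff.inner ℝ (contDiff_id.sub contDiff_const)
        (contDiff_id.sub contDiff_const))).neg)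
  -- lower bound on K
  have hΦ₀K : ∀ x ∈ K, m ≤ Φ₀ x := by
    intro x hx
    obtain ⟨a, ha, hxa⟩ := Set.mem_iUnion₂.mp (hbcov hx)
    have has : a ∈ s := (hmem_s a).mpr ha
    have hdist : ‖x - a‖ ≤ δ / 4 := by
      rw [← dist_eq_norm]; exact (mem_ball.mp hxa).le
    have hterm : m ≤ Real.exp (-(β * ⟪x - a, x - a⟫)) := by
      apply Real.exp_le_exp.mpr
      rw [real_inner_self_eq_norm_sq]
      have h2 : ‖x - a‖ ^ 2 ≤ (δ / 4) ^ 2 := by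
        apply pow_le_pow_left₀ (norm_nonneg _) hdist
      nlinarith [hβ.le]
    calc m ≤ Real.exp (-(β * ⟪x - a, x - a⟫)) := hterm
      _ ≤ Φ₀ x := Finset.single_le_sum (f := fun c => Real.exp (-(β * ⟪x - c, x - c⟫)))
          (fun c _ => (Real.exp_pos _).le) has
  -- upper bound off the thickening
  have hΦ₀out : ∀ x, x ∉ thickening δ K → Φ₀ x ≤ m / 4 := by
    intro x hx
    have hbound : ∀ a ∈ s, Real.exp (-(β * ⟪x - a, x - a⟫)) ≤ Real.exp (-(β * δ ^ 2)) := by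
      intro a ha
      have haK : a ∈ K := hbK ((hmem_s a).mp ha)
      have hdist : δ ≤ dist x a := by
        by_contra h
        exact hx (Metric.mem_thickening_iff.mpr ⟨a, haK, by linarith⟩)
      rw [dist_eq_norm] at hdist
      apply Real.exp_le_exp.mpr
      rw [real_inner_self_eq_norm_sq]
      have h2 : δ ^ 2 ≤ ‖x - a‖ ^ 2 := pow_le_pow_left₀ hδ.le hdist 2
      nlinarith [hβ.le]
    calc Φ₀ x ≤ ∑ _a ∈ s, Real.exp (-(β * δ ^ 2)) := Finset.sum_le_sum hbound
      _ = (Nc : ℝ) * Real.exp (-(β * δ ^ 2)) := by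
          rw [Finset.sum_const, nsmul_eq_mul]
      _ ≤ m / 4 := hkey
  -- positivity of the cosine factor on the relevant ball
  have hcos : ∀ x : EuclideanSpace ℝ (Fin n), x ∈ closedBall (0 : EuclideanSpace ℝ (Fin n)) R₀ → ∀ j : Fin n,
      0 < Real.cos (κ * x j) := by
    intro x hx j
    have hxn : ‖x‖ ≤ R₀ := by rwa [mem_closedBall, dist_zero_right] at hx
    have h1 : |x j| ≤ R₀ := (coord_abs_le_norm x j).trans hxn
    have h2 : |κ * x j| < 1 := by
      rw [abs_mul, abs_of_pos hκ]
      have : κ * |x j| ≤ κ * R₀ := by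
        apply mul_le_mul_of_nonneg_left h1 hκ.le
      have hκR : κ * R₀ < 1 := by
        rw [hκ_def]
        rw [inv_mul_lt_iff₀ (by linarith)]
        linarith
      linarith
    apply Real.cos_pos_of_mem_Ioo
    obtain ⟨hl, hr⟩ := abs_lt.mp h2
    have hπ := Real.pi_gt_three
    constructor <;> [skip; skip] <;> simp only [Set.mem_Ioo] <;> linarith
  clear_value m
  -- differentiability data
  have hΦ₀d : Differentiable ℝ Φ₀ := hΦ₀.differentiable (by simp)
  have hfd : ContDiff ℝ 1 (fderiv ℝ Φ₀) := hΦ₀.fderiv_right (by exact WithTop.coe_le_coe.mpr le_top)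
  -- the candidate-critical-parameter map w
  set w : EuclideanSpace ℝ (Fin n) → EuclideanSpace ℝ (Fin n) := fun x =>
    (WithLp.toLp 2 (fun j => -(fderiv ℝ Φ₀ x (EuclideanSpace.single j 1)) / (κ * Real.cos (κ * x j))) :
      EuclideanSpace ℝ (Fin n)) with hw_def
  have hproj_d : ∀ j : Fin n, Differentiable ℝ (fun x : EuclideanSpace ℝ (Fin n) => x j) :=
    fun j => (EuclideanSpace.proj (𝕜 := ℝ) j).differentiable
  have hwdiff : ∀ x ∈ closedBall (0 : EuclideanSpace ℝ (Fin n)) R₀,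
      DifferentiableAt ℝ w x := by
    intro x hx
    have hrw : w = fun x => (EuclideanSpace.equiv (Fin n) ℝ).symm
        (fun j => -(fderiv ℝ Φ₀ x (EuclideanSpace.single j 1)) /
          (κ * Real.cos (κ * x j))) := rfl
    rw [hrw]
    apply ((EuclideanSpace.equiv (Fin n) ℝ).symm.differentiableAt).comp
    apply differentiableAt_pi.mpr
    intro j
    have hnum : DifferentiableAt ℝ
        (fun y : EuclideanSpace ℝ (Fin n) =>
          -(fderiv ℝ Φ₀ y (EuclideanSpace.single j 1))) x :=
      (((hfd.clm_apply contDiff_const).differentiable one_ne_zero) x).neg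
    have hden : DifferentiableAt ℝ
        (fun y : EuclideanSpace ℝ (Fin n) => κ * Real.cos (κ * y j)) x :=
      ((Real.differentiable_cos.comp ((hproj_d j).const_mul κ)).const_mul κ) x
    have hne : κ * Real.cos (κ * x j) ≠ 0 := (mul_pos hκ (hcos x hx j)).ne'
    have hre : (fun y : EuclideanSpace ℝ (Fin n) =>
        -(fderiv ℝ Φ₀ y (EuclideanSpace.single j 1)) / (κ * Real.cos (κ * y j))) =
        fun y => -(fderiv ℝ Φ₀ y (EuclideanSpace.single j 1)) *
          (κ * Real.cos (κ * y j))⁻¹ := by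
      funext y; rw [div_eq_mul_inv]
    rw [hre]
    exact hnum.mul (hden.inv hne)
  -- the "bad" set of parameters (v, t), image of a null set, hence null
  set F : (EuclideanSpace ℝ (Fin n)) × ℝ → (EuclideanSpace ℝ (Fin n)) × ℝ := fun p =>
    (w p.1, Φ₀ p.1 + ∑ j, (w p.1) j * Real.sin (κ * p.1 j)) with hF_def
  set bad : Set ((EuclideanSpace ℝ (Fin n)) × ℝ) :=
    F '' ((closedBall (0 : EuclideanSpace ℝ (Fin n)) R₀) ×ˢ ({0} : Set ℝ)) with hbad_def
  have hbadnull : volume bad = 0 := by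
    apply addHaar_image_eq_zero_of_differentiableOn_of_addHaar_eq_zero (μ := volume)
    · intro p hp
      have hp1 : p.1 ∈ closedBall (0 : EuclideanSpace ℝ (Fin n)) R₀ := hp.1
      apply DifferentiableAt.differentiableWithinAt
      have h1 : DifferentiableAt ℝ (fun q : (EuclideanSpace ℝ (Fin n)) × ℝ => w q.1) p :=
        (hwdiff p.1 hp1).comp p differentiableAt_fst
      apply DifferentiableAt.prodMk h1
      apply DifferentiableAt.add ((hΦ₀d p.1).comp p differentiableAt_fst)
      apply DifferentiableAt.fun_sum
      intro j _
      apply DifferentiableAt.mul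
      · exact ((EuclideanSpace.proj (𝕜 := ℝ) j).differentiableAt).comp p h1
      · exact (Real.differentiable_sin.comp
          (((hproj_d j).comp differentiable_fst).const_mul κ)) p
    · rw [Measure.volume_eq_prod, Measure.prod_prod, measure_singleton, mul_zero]
  -- choose good parameters (v, t)
  set ε : ℝ := m / (8 * ((n : ℝ) + 1)) with hε_def
  have hε : 0 < ε := by rw [hε_def]; positivity
  set box : Set ((EuclideanSpace ℝ (Fin n)) × ℝ) :=
    (ball (0 : EuclideanSpace ℝ (Fin n)) ε) ×ˢ (Ioo (m/2) (3*m/4)) with hbox_def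
  have hboxopen : IsOpen box := isOpen_ball.prod isOpen_Ioo
  have hboxne : box.Nonempty := ⟨(0, 5*m/8), mem_ball_self hε, by constructor <;> linarith⟩
  obtain ⟨⟨v, t⟩, hpbox, hpbad⟩ : ∃ p, p ∈ box ∧ p ∉ bad := by
    by_contra h
    push_neg at h
    have h0 : volume box ≤ volume bad := measure_mono (fun p hp => h p hp)
    rw [hbadnull] at h0
    have hpos : volume box ≠ 0 := (hboxopen.measure_pos volume hboxne).ne'
    exact hpos (le_antisymm h0 zero_le)
  have hv : ‖v‖ < ε := by
    have := hpbox.1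
    rwa [mem_ball_zero_iff] at this
  have ht1 : m/2 < t := hpbox.2.1
  have ht2 : t < 3*m/4 := hpbox.2.2
  -- the perturbed function Φ
  set Φ : EuclideanSpace ℝ (Fin n) → ℝ :=
    fun y => Φ₀ y + ∑ j, v j * Real.sin (κ * y j) with hΦ_def
  have hΦ : ContDiff ℝ (⊤ : ℕ∞) Φ := by
    apply hΦ₀.add
    apply ContDiff.sum
    intro j _
    exact contDiff_const.mul
      (Real.contDiff_sin.comp
        (contDiff_const.mul (EuclideanSpace.proj (𝕜 := ℝ) j).contDiff))
  -- the perturbation is uniformly small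
  have hpert : ∀ x : EuclideanSpace ℝ (Fin n), |∑ j, v j * Real.sin (κ * x j)| ≤ m / 8 := by
    intro x
    have hsum : |∑ j, v j * Real.sin (κ * x j)| ≤ ∑ j : Fin n, ‖v‖ := by
      refine (Finset.abs_sum_le_sum_abs _ _).trans (Finset.sum_le_sum fun j _ => ?_)
      rw [abs_mul]
      calc |v j| * |Real.sin (κ * x j)| ≤ |v j| * 1 :=
            mul_le_mul_of_nonneg_left (Real.abs_sin_le_one _) (abs_nonneg _)
        _ = |v j| := mul_one _
        _ ≤ ‖v‖ := coord_abs_le_norm v j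
    have hsum2 : (∑ _j : Fin n, ‖v‖) = (n : ℝ) * ‖v‖ := by
      rw [Finset.sum_const, Finset.card_univ, Fintype.card_fin, nsmul_eq_mul]
    have h8 : (n : ℝ) * ε ≤ m / 8 := by
      rw [hε_def, ← mul_div_assoc,
        div_le_div_iff₀ (by positivity) (by norm_num : (0:ℝ) < 8)]
      nlinarith [hm.le, Nat.cast_nonneg (α := ℝ) n]
    have hnv : (n : ℝ) * ‖v‖ ≤ (n : ℝ) * ε :=
      mul_le_mul_of_nonneg_left hv.le (Nat.cast_nonneg _)
    rw [hsum2] at hsum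
    linarith
  -- the open set U
  set U : Set (EuclideanSpace ℝ (Fin n)) := {x | t < Φ x} with hU_def
  have hΦcont : Continuous Φ := hΦ.continuous
  have hUopen : IsOpen U := isOpen_lt continuous_const hΦcont
  have hsub : {x : EuclideanSpace ℝ (Fin n) | t ≤ Φ x} ⊆ thickening δ K := by
    intro x hx
    by_contra hxt
    have h1 := hΦ₀out x hxt
    have h2 := (abs_le.mp (hpert x)).2
    have h3 : Φ x ≤ m/4 + m/8 := by
      have : Φ x = Φ₀ x + ∑ j, v j * Real.sin (κ * x j) := rfl
      rw [this]; linarith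
    have h4 : t ≤ Φ x := hx
    have h5 : t ≤ m/4 + m/8 := le_trans h4 h3
    have h6 : m/2 < m/4 + m/8 := lt_of_lt_of_le ht1 h5
    linarith [h6, hm]
  have hclU : closure U ⊆ {x : EuclideanSpace ℝ (Fin n) | t ≤ Φ x} :=
    closure_minimal (fun x (hx : t < Φ x) => le_of_lt hx)
      (isClosed_le continuous_const hΦcont)
  have hUC : closure U ⊆ C := fun x hx => hVC (subset_closure (hthick (hsub (hclU hx))))
  have hUsub' : U ⊆ thickening δ K :=
    fun x hx => hsub (le_of_lt (show t < Φ x from hx))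
  have hUb : IsBounded U := hVb.subset
    (fun x hx => subset_closure (hthick (hUsub' hx)))
  have hAU : A ⊆ U := by
    intro x hx
    have h1 := hΦ₀K x (subset_closure hx)
    have h2 := (abs_le.mp (hpert x)).1
    show t < Φ x
    have h3 : Φ x = Φ₀ x + ∑ j, v j * Real.sin (κ * x j) := rfl
    rw [h3]
    linarith
  -- conclusion
  refine ⟨U, hUopen, hUb, hAU, hUC, Φ, t, hΦ, rfl, ?_⟩
  intro x hΦx hfzero
  have hxV : x ∈ closedBall (0 : EuclideanSpace ℝ (Fin n)) R₀ :=
    hVR (subset_closure (hthick (hsub hΦx.ge)))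
  -- derivative formula for Φ at x
  have hder : HasFDerivAt Φ ((fderiv ℝ Φ₀ x) + ∑ j, (v j * (Real.cos (κ * x j) * κ)) •
      (EuclideanSpace.proj j : EuclideanSpace ℝ (Fin n) →L[ℝ] ℝ)) x := by
    apply HasFDerivAt.add ((hΦ₀d x).hasFDerivAt)
    apply HasFDerivAt.fun_sum
    intro j _
    have h1 : HasFDerivAt (fun y : EuclideanSpace ℝ (Fin n) => κ * y j)
        (κ • (EuclideanSpace.proj j : EuclideanSpace ℝ (Fin n) →L[ℝ] ℝ)) x :=
      (EuclideanSpace.proj (𝕜 := ℝ) j).hasFDerivAt.const_mul κ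
    have h2 := (Real.hasDerivAt_sin (κ * x j)).comp_hasFDerivAt x h1
    have h3 := h2.const_mul (v j)
    convert h3 using 1
    · rfl
    · rfl
    · simp only [smul_smul, mul_assoc]
  have hDeq : (0 : EuclideanSpace ℝ (Fin n) →L[ℝ] ℝ) = (fderiv ℝ Φ₀ x) +
      ∑ j, (v j * (Real.cos (κ * x j) * κ)) •
        (EuclideanSpace.proj j : EuclideanSpace ℝ (Fin n) →L[ℝ] ℝ) := by
    rw [← hfzero, hder.fderiv]
  have hcoord : ∀ j : Fin n, v j = w x j := by
    intro j
    have h0 := congrArg (fun (D : EuclideanSpace ℝ (Fin n) →L[ℝ] ℝ) =>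
      D (EuclideanSpace.single j 1)) hDeq
    simp only [ContinuousLinearMap.zero_apply, ContinuousLinearMap.add_apply,
      ContinuousLinearMap.sum_apply, ContinuousLinearMap.smul_apply,
      PiLp.proj_apply, EuclideanSpace.single_apply, smul_eq_mul,
      mul_ite, mul_one, mul_zero, Finset.sum_ite_eq, Finset.sum_ite_eq',
      Finset.mem_univ, if_true] at h0
    have hcosj := hcos x hxV j
    have hne : κ * Real.cos (κ * x j) ≠ 0 := (mul_pos hκ hcosj).ne'
    show v j = -(fderiv ℝ Φ₀ x (EuclideanSpace.single j 1)) / (κ * Real.cos (κ * x j))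
    rw [eq_div_iff hne]
    linear_combination -h0
  have hveq : v = w x := PiLp.ext hcoord
  apply hpbad
  refine ⟨(x, 0), ⟨hxV, rfl⟩, ?_⟩
  show (w x, Φ₀ x + ∑ j, (w x) j * Real.sin (κ * x j)) = (v, t)
  rw [← hveq]
  have h2nd : Φ₀ x + ∑ j, v j * Real.sin (κ * x j) = t := hΦx
  rw [h2nd]
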